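/- Consider the first-order language L with a single binary function symbol, and endow ℕ with the L-structure in which the binary function symbol is interpreted by the remainder operation %. Then the strict order relation, i.e. the set {v : Fin 2 → ℕ | v 0 < v 1}, is definable in this structure without parameters. -/

import Mathlib

/-- The type of function symbols of the language `L`: a single binary function symbol. -/
inductive ModFunc : ℕ → Type
  | mod : ModFunc 2

/-- The first-order language with a single binary function symbol. -/
def L : FirstOrder.Language := ⟨ModFunc, fun _ => Empty⟩

/-- The `L`-structure on ℕ interpreting the binary function symbol as the remainder `%`. -/
instance : L.Structure ℕ where
  funMap := fun {n} f v =>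
    match n, f, v with
    | _, .mod, v => v 0 % v 1
  RelMap := fun r _ => r.elim

/-!
`x < y` holds exactly when `x % y = x` and `y ≠ 0`, and `y ≠ 0` is itself expressible with `%`,
since `y % y = 0` differs from `y` exactly when `y ≠ 0`.
-/

open FirstOrder FirstOrder.Language

theorem Nat.lt_iff_mod_eq_self_and_mod_self_ne_self (m n : ℕ) :
    m < n ↔ m % n = m ∧ n % n ≠ n := by
  rcases eq_or_ne n 0 with rfl | hn
  · simp
  · simp [Nat.mod_self, hn.symm, Nat.mod_eq_iff_lt hn]

def modTerm {α : Type*} (a b : L.Term α) : L.Term α :=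
  Term.func ModFunc.mod ![a, b]

@[simp]
theorem realize_modTerm {α : Type*} (a b : L.Term α) (v : α → ℕ) :
    (modTerm a b).realize v = a.realize v % b.realize v :=
  rfl

theorem lt_definable_in_mod :
    Set.Definable (∅ : Set ℕ) L {v : Fin 2 → ℕ | v 0 < v 1} := by
  rw [Set.empty_definable_iff]
  refine ⟨(modTerm (Term.var 0) (Term.var 1)).equal (Term.var 0) ⊓
    ∼((modTerm (Term.var 1) (Term.var 1)).equal (Term.var 1)), ?_⟩
  ext v
  simp [Nat.lt_iff_mod_eq_self_and_mod_self_ne_self]
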